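/- The function F_1^*(t,r) = (T-t)(7(T-t)^2 - 15r^2)/(5r^2 + 3(T-t)^2)^3 solves the linearized equation (∂_t^2 - ∂_r^2 - (6/r)∂_r)u(t,r) = 2 u_T^*(t,r) u(t,r) for all (t,r) ≠ (T,0), r > 0, where u_T^*(t,r) = 24(21(T-t)^2 - 5r^2)/(3(T-t)^2 + 5r^2)^2. -/

import Mathlib

/-!
`F_1^*` depends on `t` only through `s = T - t`, and `∂_t² = ∂_s²`, so it suffices to work with
the profile `F1star s r`. Its first and second partial derivatives are rational functions with
denominator a power of `5r² + 3s²`, which is positive for `r ≠ 0`; once they are computed, the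
linearized equation is a polynomial identity.
-/

open Topology

section calculus

variable {𝕜 : Type*} [NontriviallyNormedField 𝕜]

theorem HasDerivAt.div_pow {f g : 𝕜 → 𝕜} {f' g' x : 𝕜} (hf : HasDerivAt f f' x)
    (hg : HasDerivAt g g' x) (hx : g x ≠ 0) (k : ℕ) :
    HasDerivAt (fun y => f y / g y ^ k) ((f' * g x - k * f x * g') / g x ^ (k + 1)) x := by
  refine (hf.div (hg.pow k) (pow_ne_zero k hx)).congr_deriv ?_
  simp only [Pi.pow_apply]
  rcases k with _ | k
  · field_simp
    simp
  · field_simp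
    push_cast
    ring

theorem deriv_deriv_comp_const_sub {F : Type*} [NormedAddCommGroup F] [NormedSpace 𝕜 F]
    (f : 𝕜 → F) (a x : 𝕜) :
    deriv (deriv fun y => f (a - y)) x = deriv (deriv f) (a - x) := by
  have hd : deriv (fun y => f (a - y)) = fun y => -deriv f (a - y) :=
    funext fun y => deriv_comp_const_sub f a y
  rw [hd, deriv.fun_neg, deriv_comp_const_sub, neg_neg]

end calculus

noncomputable def F1star (s r : ℝ) : ℝ :=
  s * (7 * s ^ 2 - 15 * r ^ 2) / (5 * r ^ 2 + 3 * s ^ 2) ^ 3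

theorem F1star_denom_ne_zero {r : ℝ} (s : ℝ) (hr : r ≠ 0) : 5 * r ^ 2 + 3 * s ^ 2 ≠ 0 := by
  positivity

section derivatives

variable (s r : ℝ)

theorem hasDerivAt_F1star_denom_fst :
    HasDerivAt (fun s : ℝ => 5 * r ^ 2 + 3 * s ^ 2) (6 * s) s :=
  (((hasDerivAt_pow 2 s).const_mul 3).const_add _).congr_deriv (by simp; ring)

theorem hasDerivAt_F1star_denom_snd :
    HasDerivAt (fun r : ℝ => 5 * r ^ 2 + 3 * s ^ 2) (10 * r) r :=
  (((hasDerivAt_pow 2 r).const_mul 5).add_const _).congr_deriv (by simp; ring)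

variable {s r}

theorem hasDerivAt_F1star_fst (h : 5 * r ^ 2 + 3 * s ^ 2 ≠ 0) :
    HasDerivAt (fun s => F1star s r)
      (-(75 * r ^ 4 - 330 * s ^ 2 * r ^ 2 + 63 * s ^ 4) / (5 * r ^ 2 + 3 * s ^ 2) ^ 4) s := by
  have hN : HasDerivAt (fun s : ℝ => s * (7 * s ^ 2 - 15 * r ^ 2)) (21 * s ^ 2 - 15 * r ^ 2) s :=
    ((hasDerivAt_id s).mul (((hasDerivAt_pow 2 s).const_mul 7).sub_const _)).congr_deriv
      (by simp; ring)
  refine (hN.div_pow (hasDerivAt_F1star_denom_fst s r) h 3).congr_deriv ?_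
  field_simp
  ring

theorem hasDerivAt_F1star_fst_fst (h : 5 * r ^ 2 + 3 * s ^ 2 ≠ 0) :
    HasDerivAt
      (fun s => -(75 * r ^ 4 - 330 * s ^ 2 * r ^ 2 + 63 * s ^ 4) / (5 * r ^ 2 + 3 * s ^ 2) ^ 4)
      ((5100 * s * r ^ 4 - 7200 * s ^ 3 * r ^ 2 + 756 * s ^ 5) / (5 * r ^ 2 + 3 * s ^ 2) ^ 5)
      s := by
  have hN : HasDerivAt (fun s : ℝ => -(75 * r ^ 4 - 330 * s ^ 2 * r ^ 2 + 63 * s ^ 4))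
      (660 * s * r ^ 2 - 252 * s ^ 3) s :=
    (((((hasDerivAt_pow 2 s).const_mul 330).mul_const (r ^ 2)).const_sub (75 * r ^ 4)).add
      ((hasDerivAt_pow 4 s).const_mul 63)).neg.congr_deriv (by simp; ring)
  refine (hN.div_pow (hasDerivAt_F1star_denom_fst s r) h 4).congr_deriv ?_
  field_simp
  ring

theorem hasDerivAt_F1star_snd (h : 5 * r ^ 2 + 3 * s ^ 2 ≠ 0) :
    HasDerivAt (fun r => F1star s r)
      ((300 * s * r ^ 3 - 300 * s ^ 3 * r) / (5 * r ^ 2 + 3 * s ^ 2) ^ 4) r := by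
  have hN : HasDerivAt (fun r : ℝ => s * (7 * s ^ 2 - 15 * r ^ 2)) (-30 * s * r) r :=
    ((((hasDerivAt_pow 2 r).const_mul 15).const_sub _).const_mul s).congr_deriv (by simp; ring)
  refine (hN.div_pow (hasDerivAt_F1star_denom_snd s r) h 3).congr_deriv ?_
  field_simp
  ring

theorem hasDerivAt_F1star_snd_snd (h : 5 * r ^ 2 + 3 * s ^ 2 ≠ 0) :
    HasDerivAt (fun r => (300 * s * r ^ 3 - 300 * s ^ 3 * r) / (5 * r ^ 2 + 3 * s ^ 2) ^ 4)
      ((-7500 * s * r ^ 4 + 13200 * s ^ 3 * r ^ 2 - 900 * s ^ 5) / (5 * r ^ 2 + 3 * s ^ 2) ^ 5)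
      r := by
  have hN : HasDerivAt (fun r : ℝ => 300 * s * r ^ 3 - 300 * s ^ 3 * r)
      (900 * s * r ^ 2 - 300 * s ^ 3) r :=
    (((hasDerivAt_pow 3 r).const_mul (300 * s)).sub
      ((hasDerivAt_id r).const_mul (300 * s ^ 3))).congr_deriv (by simp; ring)
  refine (hN.div_pow (hasDerivAt_F1star_denom_snd s r) h 4).congr_deriv ?_
  field_simp
  ring

variable (s)

theorem deriv_deriv_F1star_fst (hr : r ≠ 0) :
    deriv (deriv fun s => F1star s r) s =
      (5100 * s * r ^ 4 - 7200 * s ^ 3 * r ^ 2 + 756 * s ^ 5) / (5 * r ^ 2 + 3 * s ^ 2) ^ 5 := by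
  have hd : deriv (fun s => F1star s r) = fun s =>
      -(75 * r ^ 4 - 330 * s ^ 2 * r ^ 2 + 63 * s ^ 4) / (5 * r ^ 2 + 3 * s ^ 2) ^ 4 :=
    funext fun s => (hasDerivAt_F1star_fst (F1star_denom_ne_zero s hr)).deriv
  rw [hd]
  exact (hasDerivAt_F1star_fst_fst (F1star_denom_ne_zero s hr)).deriv

theorem deriv_deriv_F1star_snd (hr : r ≠ 0) :
    deriv (deriv fun r => F1star s r) r =
      (-7500 * s * r ^ 4 + 13200 * s ^ 3 * r ^ 2 - 900 * s ^ 5) / (5 * r ^ 2 + 3 * s ^ 2) ^ 5 := by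
  have hd : deriv (fun r => F1star s r) =ᶠ[𝓝 r] fun r =>
      (300 * s * r ^ 3 - 300 * s ^ 3 * r) / (5 * r ^ 2 + 3 * s ^ 2) ^ 4 := by
    filter_upwards [eventually_ne_nhds hr] with x hx
    exact (hasDerivAt_F1star_snd (F1star_denom_ne_zero s hx)).deriv
  rw [hd.deriv_eq]
  exact (hasDerivAt_F1star_snd_snd (F1star_denom_ne_zero s hr)).deriv

theorem F1star_solves_linearized_profile (hr : r ≠ 0) :
    deriv (deriv fun s => F1star s r) s - deriv (deriv fun r => F1star s r) r
      - 6 / r * deriv (fun r => F1star s r) r =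
      2 * (24 * (21 * s ^ 2 - 5 * r ^ 2) / (3 * s ^ 2 + 5 * r ^ 2) ^ 2) * F1star s r := by
  have hD := F1star_denom_ne_zero s hr
  rw [deriv_deriv_F1star_fst s hr, deriv_deriv_F1star_snd s hr, (hasDerivAt_F1star_snd hD).deriv,
    F1star, add_comm (3 * s ^ 2)]
  field_simp
  ring

end derivatives

theorem F1star_solves_linearized (T : ℝ) (uStar F : ℝ → ℝ → ℝ)
    (huStar : ∀ t r : ℝ, uStar t r = 24 * (21 * (T - t) ^ 2 - 5 * r ^ 2) /
      (3 * (T - t) ^ 2 + 5 * r ^ 2) ^ 2)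
    (hF : ∀ t r : ℝ, F t r = (T - t) * (7 * (T - t) ^ 2 - 15 * r ^ 2) /
      (5 * r ^ 2 + 3 * (T - t) ^ 2) ^ 3) :
    ∀ t r : ℝ, 0 < r → (t, r) ≠ (T, 0) →
      deriv (deriv (fun t' => F t' r)) t - deriv (deriv (fun r' => F t r')) r
        - (6 / r) * deriv (fun r' => F t r') r = 2 * uStar t r * F t r := by
  intro t r hr _
  have hFt : (fun t' => F t' r) = fun t' => F1star (T - t') r := funext fun t' => hF t' r
  have hFr : (fun r' => F t r') = fun r' => F1star (T - t) r' := funext fun r' => hF t r'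
  rw [hFt, hFr, deriv_deriv_comp_const_sub (F1star · r), huStar, hF]
  exact F1star_solves_linearized_profile (T - t) hr.ne'
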